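/- Suppose graph G is decomposed into modules M_0, ..., M_k with |M_0| = 1, and G admits a HIST in which the vertex of M_0 is not a leaf. Then there exists a HIST T of G such that for each i ≥ 1, either all vertices of M_i are leaves of T, or exactly one vertex u ∈ M_i has deg_T(u) ≥ 3 with all other vertices of M_i being leaves, and moreover either deg_T(u) = 3 with u having exactly one T-neighbor inside M_i, or deg_T(u) ≥ 3 with u having no T-neighbor inside M_i. -/

import Mathlib

set_option linter.unusedSectionVars false

/-- A homeomorphically irreducible spanning tree (HIST) of `G`. -/
def IsHIST {V : Type*} (G T : SimpleGraph V) : Prop :=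
  T ≤ G ∧ T.Connected ∧ T.IsAcyclic ∧ ∀ v : V, (T.neighborSet v).ncard ≠ 2

namespace Stmt15

open SimpleGraph

variable {V : Type*}

/-- The graph determined by a parent map `f`. -/
def graphOf (f : V → V) : SimpleGraph V := SimpleGraph.fromRel (fun a b => f a = b)

lemma graphOf_adj (f : V → V) (x y : V) :
    (graphOf f).Adj x y ↔ x ≠ y ∧ (f x = y ∨ f y = x) := by
  simp [graphOf, SimpleGraph.fromRel_adj]

/-- children of `v` under parent map `f` -/
def kids (f : V → V) (v : V) : Set V := {x | f x = v ∧ x ≠ v}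

section Basic

variable (w : V) (f : V → V) (ρ : V → ℕ)
variable (hfw : f w = w) (hρ : ∀ v, v ≠ w → ρ (f v) < ρ v)

include hfw hρ

lemma f_ne_self {v : V} (hv : v ≠ w) : f v ≠ v := by
  intro h
  have := hρ v hv
  rw [h] at this
  omega

lemma no_mutual {x y : V} (hxy : x ≠ y) (h1 : f x = y) (h2 : f y = x) : False := by
  by_cases hx : x = w
  · subst hx; rw [hfw] at h1; exact hxy h1
  · by_cases hy : y = w
    · subst hy; rw [hfw] at h2; exact hxy h2.symm
    · have a1 := hρ x hx
      have a2 := hρ y hy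
      rw [h1] at a1; rw [h2] at a2; omega

lemma nbr_eq_w : (graphOf f).neighborSet w = kids f w := by
  ext x
  simp only [SimpleGraph.mem_neighborSet, graphOf_adj, kids, Set.mem_setOf_eq]
  constructor
  · rintro ⟨hne, h | h⟩
    · rw [hfw] at h; exact absurd h hne
    · exact ⟨h, fun hxw => hne hxw.symm⟩
  · rintro ⟨h, hne⟩
    exact ⟨fun hh => hne hh.symm, Or.inr h⟩

lemma nbr_eq_of_ne {v : V} (hv : v ≠ w) :
    (graphOf f).neighborSet v = insert (f v) (kids f v) := by
  ext x
  simp only [SimpleGraph.mem_neighborSet, graphOf_adj, kids, Set.mem_insert_iff,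
    Set.mem_setOf_eq]
  constructor
  · rintro ⟨hne, h | h⟩
    · exact Or.inl h.symm
    · exact Or.inr ⟨h, fun hxv => hne hxv.symm⟩
  · rintro (rfl | ⟨h, hne⟩)
    · exact ⟨fun hh => f_ne_self w f ρ hfw hρ hv hh.symm, Or.inl rfl⟩
    · exact ⟨fun hh => hne hh.symm, Or.inr h⟩

lemma fv_not_kid {v : V} (hv : v ≠ w) : f v ∉ kids f v := by
  rintro ⟨h1, h2⟩
  exact no_mutual w f ρ hfw hρ h2 h1 rfl

end Basic

section Tree

variable {G : SimpleGraph V} (w : V) (f : V → V) (ρ : V → ℕ)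
variable (hfw : f w = w) (hρ : ∀ v, v ≠ w → ρ (f v) < ρ v)

include hfw

lemma graphOf_le (hadj : ∀ v, v ≠ w → G.Adj v (f v)) : graphOf f ≤ G := by
  intro x y hxy
  rw [graphOf_adj] at hxy
  obtain ⟨hne, h | h⟩ := hxy
  · have hx : x ≠ w := by rintro rfl; rw [hfw] at h; exact hne h
    exact h ▸ hadj x hx
  · have hy : y ≠ w := by rintro rfl; rw [hfw] at h; exact hne h.symm
    exact (h ▸ hadj y hy).symm

include hρ

lemma adj_parent {v : V} (hv : v ≠ w) : (graphOf f).Adj v (f v) := by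
  rw [graphOf_adj]
  exact ⟨Ne.symm (f_ne_self w f ρ hfw hρ hv), Or.inl rfl⟩

lemma reachable_w : ∀ v, (graphOf f).Reachable v w := by
  suffices h : ∀ n v, ρ v = n → (graphOf f).Reachable v w by
    exact fun v => h (ρ v) v rfl
  intro n
  induction n using Nat.strong_induction_on with
  | _ n ih =>
    intro v hv
    by_cases hvw : v = w
    · exact hvw ▸ Reachable.refl v
    · exact (adj_parent w f ρ hfw hρ hvw).reachable.trans
        (ih (ρ (f v)) (hv ▸ hρ v hvw) (f v) rfl)

lemma graphOf_connected [Nonempty V] : (graphOf f).Connected := by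
  refine ⟨fun u v => ?_⟩
  exact (reachable_w w f ρ hfw hρ u).trans (reachable_w w f ρ hfw hρ v).symm

lemma iter_rho_le (n : ℕ) (z : V) : ρ (f^[n] z) ≤ ρ z := by
  induction n with
  | zero => simp
  | succ m ih =>
    rw [Function.iterate_succ_apply']
    by_cases h : f^[m] z = w
    · rw [h, hfw]; rw [h] at ih; exact ih
    · exact le_trans (le_of_lt (hρ _ h)) ih

lemma chain_closed {x : V} (hx : x ≠ w) {a b : V} (ha : ∃ n, f^[n] a = x)
    (hadj : (graphOf f).Adj a b) (hb : ¬ ∃ n, f^[n] b = x) :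
    a = x ∧ b = f x := by
  rw [graphOf_adj] at hadj
  obtain ⟨hne, hfa | hfb⟩ := hadj
  · obtain ⟨n, hn⟩ := ha
    cases n with
    | zero =>
      simp only [Function.iterate_zero_apply] at hn
      subst hn
      exact ⟨rfl, hfa.symm⟩
    | succ m =>
      exfalso
      apply hb
      exact ⟨m, by rw [← hfa, ← Function.iterate_succ_apply]; exact hn⟩
  · exfalso
    apply hb
    obtain ⟨n, hn⟩ := ha
    exact ⟨n + 1, by rw [Function.iterate_succ_apply, hfb]; exact hn⟩

lemma walk_stay {x : V} (hx : x ≠ w) {a c : V} (p : (graphOf f).Walk a c)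
    (ha : ∃ n, f^[n] a = x) (hp : s(x, f x) ∉ p.edges) : ∃ n, f^[n] c = x := by
  induction p with
  | nil => exact ha
  | @cons u b c hadj q ih =>
    simp only [SimpleGraph.Walk.edges_cons, List.mem_cons] at hp
    push_neg at hp
    by_cases hb : ∃ n, f^[n] b = x
    · exact ih hb hp.2
    · obtain ⟨rfl, rfl⟩ := chain_closed w f ρ hfw hρ hx ha hadj hb
      exact absurd rfl hp.1

lemma walk_must_use {x : V} (hx : x ≠ w) (p : (graphOf f).Walk x (f x)) :
    s(x, f x) ∈ p.edges := by
  by_contra hcon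
  obtain ⟨n, hn⟩ := walk_stay w f ρ hfw hρ hx p ⟨0, rfl⟩ hcon
  cases n with
  | zero =>
    simp only [Function.iterate_zero_apply] at hn
    exact f_ne_self w f ρ hfw hρ hx hn
  | succ m =>
    have h1 : ρ (f^[m + 1] (f x)) ≤ ρ (f x) := iter_rho_le w f ρ hfw hρ (m + 1) (f x)
    have h2 : ρ (f x) < ρ x := hρ x hx
    rw [hn] at h1
    omega

lemma graphOf_acyclic : (graphOf f).IsAcyclic := by
  rw [SimpleGraph.isAcyclic_iff_forall_adj_isBridge]
  intro u v huv
  rw [SimpleGraph.isBridge_iff_adj_and_forall_walk_mem_edges]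
  intro p
  have h := (graphOf_adj f u v).mp huv
  obtain ⟨hne, hfu | hfv⟩ := h
  · have hu : u ≠ w := by rintro rfl; rw [hfw] at hfu; exact hne hfu
    subst hfu
    exact walk_must_use w f ρ hfw hρ hu p
  · have hv : v ≠ w := by rintro rfl; rw [hfw] at hfv; exact hne hfv.symm
    subst hfv
    have := walk_must_use w f ρ hfw hρ hv p.reverse
    rw [SimpleGraph.Walk.edges_reverse, List.mem_reverse] at this
    rwa [Sym2.eq_swap]

end Tree

section Move

open scoped Classical

variable [Fintype V]

/-- the rewired parent map -/
noncomputable def mv (Mi : Set V) (h b x₀ : V) (f : V → V) : V → V := fun v =>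
  if f v ∈ Mi ∧ v ∉ Mi then h
  else if v ∈ Mi ∧ f v ∈ Mi ∧ v ≠ b then x₀
  else f v

/-- vertices outside `Mi` with parent in `Mi` -/
def Rset (Mi : Set V) (f : V → V) : Set V := {v | v ∉ Mi ∧ f v ∈ Mi}

/-- retargeted vertices -/
def Dset (Mi : Set V) (b : V) (f : V → V) : Set V := {v | v ∈ Mi ∧ f v ∈ Mi ∧ v ≠ b}

variable {Mi : Set V} {h b x₀ : V} {f : V → V} {w : V}

lemma hbh (Hw : w ∉ Mi) (HM : h ∈ Mi) (Hb : b = w ∨ (b ∈ Mi ∧ f b = h ∧ b ≠ h)) : b ≠ h := by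
  rcases Hb with rfl | ⟨_, _, hne⟩
  · exact fun hh => Hw (hh ▸ HM)
  · exact hne

lemma mv_w (hfw : f w = w) (Hw : w ∉ Mi) : mv Mi h b x₀ f w = w := by
  simp [mv, hfw, Hw]

lemma mv_of_R {v : V} (hv : v ∈ Rset Mi f) : mv Mi h b x₀ f v = h := by
  unfold mv
  rw [if_pos ⟨hv.2, hv.1⟩]

lemma mv_of_D {v : V} (hv : v ∈ Dset Mi b f) : mv Mi h b x₀ f v = x₀ := by
  unfold mv
  rw [if_neg, if_pos ⟨hv.1, hv.2.1, hv.2.2⟩]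
  intro hc; exact hc.2 hv.1

lemma mv_of_out {v : V} (hv : v ∉ Mi) (hv2 : v ∉ Rset Mi f) : mv Mi h b x₀ f v = f v := by
  unfold mv
  rw [if_neg, if_neg]
  · intro hc; exact hv hc.1
  · intro hc; exact hv2 ⟨hv, hc.1⟩

lemma mv_of_in {v : V} (hv : v ∈ Mi) (hv2 : v ∉ Dset Mi b f) : mv Mi h b x₀ f v = f v := by
  unfold mv
  rw [if_neg, if_neg]
  · intro hc
    exact hv2 ⟨hc.1, hc.2.1, hc.2.2⟩
  · intro hc; exact hc.2 hv

lemma mv_b_of_mem (Hw : w ∉ Mi) (Hb : b = w ∨ (b ∈ Mi ∧ f b = h ∧ b ≠ h)) (hbMi : b ∈ Mi) :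
    mv Mi h b x₀ f b = h := by
  rcases Hb with rfl | ⟨_, hfb, _⟩
  · exact absurd hbMi Hw
  · rw [mv_of_in hbMi (fun hc => hc.2.2 rfl)]
    exact hfb

lemma mv_h_mem (Hw : w ∉ Mi) (HM : h ∈ Mi) (Hb : b = w ∨ (b ∈ Mi ∧ f b = h ∧ b ≠ h))
    (hfh : f h ∈ Mi) : mv Mi h b x₀ f h = x₀ := by
  unfold mv
  rw [if_neg, if_pos ⟨HM, hfh, (hbh Hw HM Hb).symm⟩]
  intro hc; exact hc.2 HM

lemma mv_h_not_mem (hfh : f h ∉ Mi) (HM : h ∈ Mi) : mv Mi h b x₀ f h = f h := by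
  exact mv_of_in HM (fun hc => hfh hc.2.1)

end Move

section MoveKids

open scoped Classical

variable [Fintype V]
variable {Mi : Set V} {h b x₀ : V} {f : V → V} {w : V}

lemma mv_cases (HM : h ∈ Mi) (Hw : w ∉ Mi) (Hb : b = w ∨ (b ∈ Mi ∧ f b = h ∧ b ≠ h)) (v : V) :
    (v ∈ Rset Mi f ∧ mv Mi h b x₀ f v = h) ∨ (v ∈ Dset Mi b f ∧ mv Mi h b x₀ f v = x₀) ∨
      (v ∉ Rset Mi f ∧ v ∉ Dset Mi b f ∧ mv Mi h b x₀ f v = f v) := by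
  by_cases hR : v ∈ Rset Mi f
  · exact Or.inl ⟨hR, mv_of_R hR⟩
  by_cases hD : v ∈ Dset Mi b f
  · exact Or.inr (Or.inl ⟨hD, mv_of_D hD⟩)
  refine Or.inr (Or.inr ⟨hR, hD, ?_⟩)
  by_cases hv : v ∈ Mi
  · exact mv_of_in hv hD
  · exact mv_of_out hv hR

lemma kids_mv_out (HM : h ∈ Mi) (Hw : w ∉ Mi) (Hb : b = w ∨ (b ∈ Mi ∧ f b = h ∧ b ≠ h))
    (hx₀ : x₀ ∉ Mi) {x : V} (hx : x ∉ Mi) (hxx : x ≠ x₀) :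
    kids (mv Mi h b x₀ f) x = kids f x := by
  ext v
  simp only [kids, Set.mem_setOf_eq]
  constructor
  · rintro ⟨hmv, hne⟩
    rcases mv_cases HM Hw Hb (x₀ := x₀) v with ⟨_, he⟩ | ⟨_, he⟩ | ⟨_, _, he⟩
    · rw [he] at hmv; exact absurd (hmv ▸ HM) hx
    · rw [he] at hmv; exact absurd hmv.symm hxx
    · rw [he] at hmv; exact ⟨hmv, hne⟩
  · rintro ⟨hfv, hne⟩
    have hvR : v ∉ Rset Mi f := fun hc => hx (hfv ▸ hc.2)
    have hvD : v ∉ Dset Mi b f := fun hc => hx (hfv ▸ hc.2.1)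
    rcases mv_cases HM Hw Hb (x₀ := x₀) v with ⟨hc, _⟩ | ⟨hc, _⟩ | ⟨_, _, he⟩
    · exact absurd hc hvR
    · exact absurd hc hvD
    · rw [he]; exact ⟨hfv, hne⟩

lemma kids_mv_x₀ (HM : h ∈ Mi) (Hw : w ∉ Mi) (Hb : b = w ∨ (b ∈ Mi ∧ f b = h ∧ b ≠ h))
    (hx₀ : x₀ ∉ Mi) :
    kids (mv Mi h b x₀ f) x₀ = kids f x₀ ∪ Dset Mi b f := by
  ext v
  simp only [kids, Set.mem_setOf_eq, Set.mem_union]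
  constructor
  · rintro ⟨hmv, hne⟩
    rcases mv_cases HM Hw Hb (x₀ := x₀) v with ⟨_, he⟩ | ⟨hc, _⟩ | ⟨_, _, he⟩
    · rw [he] at hmv; exact absurd (hmv ▸ HM) hx₀
    · exact Or.inr hc
    · rw [he] at hmv; exact Or.inl ⟨hmv, hne⟩
  · rintro (⟨hfv, hne⟩ | hD)
    · have hvR : v ∉ Rset Mi f := fun hc => hx₀ (hfv ▸ hc.2)
      have hvD : v ∉ Dset Mi b f := fun hc => hx₀ (hfv ▸ hc.2.1)
      rcases mv_cases HM Hw Hb (x₀ := x₀) v with ⟨hc, _⟩ | ⟨hc, _⟩ | ⟨_, _, he⟩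
      · exact absurd hc hvR
      · exact absurd hc hvD
      · rw [he]; exact ⟨hfv, hne⟩
    · exact ⟨mv_of_D hD, fun hc => hx₀ (hc ▸ hD.1)⟩

lemma kids_mv_h (HM : h ∈ Mi) (Hw : w ∉ Mi) (Hb : b = w ∨ (b ∈ Mi ∧ f b = h ∧ b ≠ h))
    (hx₀ : x₀ ∉ Mi) :
    kids (mv Mi h b x₀ f) h = Rset Mi f ∪ ({b} ∩ Mi) := by
  ext v
  simp only [kids, Set.mem_setOf_eq, Set.mem_union, Set.mem_inter_iff, Set.mem_singleton_iff]
  constructor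
  · rintro ⟨hmv, hne⟩
    rcases mv_cases HM Hw Hb (x₀ := x₀) v with ⟨hc, _⟩ | ⟨_, he⟩ | ⟨hR, hD, he⟩
    · exact Or.inl hc
    · rw [he] at hmv; exact absurd (hmv ▸ hx₀) (fun hc2 => hc2 HM)
    · rw [he] at hmv
      have hvMi : v ∈ Mi := by
        by_contra hvm
        exact hR ⟨hvm, hmv ▸ HM⟩
      have : v = b := by
        by_contra hvb
        exact hD ⟨hvMi, hmv ▸ HM, hvb⟩
      exact Or.inr ⟨this, hvMi⟩
  · rintro (hR | ⟨rfl, hbMi⟩)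
    · exact ⟨mv_of_R hR, fun hc => hR.1 (hc ▸ HM)⟩
    · exact ⟨mv_b_of_mem Hw Hb hbMi, hbh Hw HM Hb⟩

lemma kids_mv_leaf (HM : h ∈ Mi) (Hw : w ∉ Mi) (Hb : b = w ∨ (b ∈ Mi ∧ f b = h ∧ b ≠ h))
    (hx₀ : x₀ ∉ Mi) {z : V} (hz : z ∈ Mi) (hzh : z ≠ h) :
    kids (mv Mi h b x₀ f) z = ∅ := by
  ext v
  simp only [kids, Set.mem_setOf_eq, Set.mem_empty_iff_false, iff_false, not_and]
  intro hmv
  exfalso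
  rcases mv_cases HM Hw Hb (x₀ := x₀) v with ⟨_, he⟩ | ⟨_, he⟩ | ⟨hR, hD, he⟩
  · rw [he] at hmv; exact hzh hmv.symm
  · rw [he] at hmv; exact hx₀ (hmv ▸ hz)
  · rw [he] at hmv
    have hvMi : v ∈ Mi := by
      by_contra hvm
      exact hR ⟨hvm, hmv ▸ hz⟩
    have hvb : v = b := by
      by_contra hvb
      exact hD ⟨hvMi, hmv ▸ hz, hvb⟩
    subst hvb
    rcases Hb with rfl | ⟨_, hfb, _⟩
    · exact Hw hvMi
    · rw [hfb] at hmv; exact hzh hmv.symm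

end MoveKids

section MoveRank

open scoped Classical

variable [Fintype V]
variable {Mi : Set V} {h b x₀ : V} {f : V → V} {w : V} {ρ : V → ℕ}

/-- new rank function after the move -/
noncomputable def mrk (Mi : Set V) (h b : V) (f : V → V) (ρ : V → ℕ) (N : ℕ) : V → ℕ :=
  fun v =>
  if ∀ n, f^[n] v ∉ Mi then ρ v
  else if v = h then N
  else if v = b then N + 1
  else if v ∈ Mi then 2 * N + 4
  else N + 2 + ρ v

lemma A_closed (hA : ∀ n, f^[n] v ∉ Mi) : ∀ n, f^[n] (f v) ∉ Mi := by
  intro n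
  rw [← Function.iterate_succ_apply]
  exact hA (n + 1)

lemma A_w (hfw : f w = w) (Hw : w ∉ Mi) : ∀ n, f^[n] w ∉ Mi := by
  intro n
  rw [Function.iterate_fixed hfw]
  exact Hw

lemma mrk_decreasing (hfw : f w = w) (hρ : ∀ v, v ≠ w → ρ (f v) < ρ v)
    (HM : h ∈ Mi) (Hw : w ∉ Mi)
    (Hb : b = w ∨ (b ∈ Mi ∧ f b = h ∧ b ≠ h))
    (HxA : ∀ n, f^[n] x₀ ∉ Mi)
    (HfhA : f h ∉ Mi → ∀ n, f^[n] (f h) ∉ Mi) {N : ℕ} (hN : ∀ v, ρ v < N) :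
    ∀ v, v ≠ w → mrk Mi h b f ρ N (mv Mi h b x₀ f v) < mrk Mi h b f ρ N v := by
  have hAh : ¬ (∀ n, f^[n] h ∉ Mi) := fun hc => hc 0 HM
  have hbh' : b ≠ h := hbh Hw HM Hb
  have hval_A : ∀ u, (∀ n, f^[n] u ∉ Mi) → mrk Mi h b f ρ N u = ρ u := by
    intro u hu; simp only [mrk]; rw [if_pos hu]
  have hval_h : mrk Mi h b f ρ N h = N := by
    simp only [mrk]; rw [if_neg hAh]; simp
  intro v hvw
  by_cases hAv : ∀ n, f^[n] v ∉ Mi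
  · -- v in A : parent unchanged and in A
    have hvMi : v ∉ Mi := hAv 0
    have hfvMi : f v ∉ Mi := hAv 1
    have he : mv Mi h b x₀ f v = f v :=
      mv_of_out hvMi (fun hc => hfvMi hc.2)
    rw [he, hval_A v hAv, hval_A (f v) (A_closed hAv)]
    exact hρ v hvw
  · by_cases hvh : v = h
    · subst hvh
      rw [hval_h]
      by_cases hfh : f v ∈ Mi
      · rw [mv_h_mem Hw HM Hb hfh, hval_A x₀ HxA]
        exact hN x₀
      · rw [mv_h_not_mem hfh HM, hval_A (f v) (HfhA hfh)]
        exact hN (f v)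
    · by_cases hvb : v = b
      · have hbMi : b ∈ Mi := by
          rcases Hb with rfl | ⟨hm, _, _⟩
          · exact absurd hvb hvw
          · exact hm
        have hmrkb : mrk Mi h b f ρ N v = N + 1 := by
          simp only [mrk]
          rw [if_neg hAv, if_neg hvh, if_pos hvb]
        rw [hmrkb, hvb, mv_b_of_mem Hw Hb hbMi, hval_h]
        omega
      · by_cases hvMi : v ∈ Mi
        · have hmrkv : mrk Mi h b f ρ N v = 2 * N + 4 := by
            simp only [mrk]
            rw [if_neg (fun hc => hc 0 hvMi), if_neg hvh, if_neg hvb, if_pos hvMi]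
          rw [hmrkv]
          by_cases hfv : f v ∈ Mi
          · rw [mv_of_D ⟨hvMi, hfv, hvb⟩, hval_A x₀ HxA]
            have := hN x₀; omega
          · rw [mv_of_in hvMi (fun hc => hfv hc.2.1)]
            by_cases hAfv : ∀ n, f^[n] (f v) ∉ Mi
            · rw [hval_A (f v) hAfv]; have := hN (f v); omega
            · have hfvh : f v ≠ h := fun hc => hfv (hc ▸ HM)
              have hfvb : f v ≠ b := by
                rcases Hb with rfl | ⟨hm, _, _⟩
                · intro hc; exact hAfv (hc ▸ A_w hfw Hw)
                · intro hc; exact hfv (hc ▸ hm)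
              have : mrk Mi h b f ρ N (f v) = N + 2 + ρ (f v) := by
                simp only [mrk]
                rw [if_neg hAfv, if_neg hfvh, if_neg hfvb, if_neg hfv]
              rw [this]
              have := hN (f v); omega
        · -- v outside Mi, not in A
          have hmrkv : mrk Mi h b f ρ N v = N + 2 + ρ v := by
            have hvb2 : v ≠ b := hvb
            simp only [mrk]
            rw [if_neg hAv, if_neg hvh, if_neg hvb2, if_neg hvMi]
          rw [hmrkv]
          by_cases hfv : f v ∈ Mi
          · rw [mv_of_R ⟨hvMi, hfv⟩, hval_h]
            omega
          · rw [mv_of_out hvMi (fun hc => hfv hc.2)]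
            by_cases hAfv : ∀ n, f^[n] (f v) ∉ Mi
            · rw [hval_A (f v) hAfv]
              have := hN (f v); omega
            · have hfvh : f v ≠ h := fun hc => hfv (hc ▸ HM)
              have hfvb : f v ≠ b := by
                rcases Hb with rfl | ⟨hm, _, _⟩
                · intro hc; exact hAfv (hc ▸ A_w hfw Hw)
                · intro hc; exact hfv (hc ▸ hm)
              have : mrk Mi h b f ρ N (f v) = N + 2 + ρ (f v) := by
                simp only [mrk]
                rw [if_neg hAfv, if_neg hfvh, if_neg hfvb, if_neg hfv]
              rw [this]
              have := hρ v hvw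
              omega

end MoveRank

section Deg

variable [Fintype V] {w : V} {f : V → V} {ρ : V → ℕ}

lemma deg_formula (hfw : f w = w) (hρ : ∀ v, v ≠ w → ρ (f v) < ρ v) {v : V} (hv : v ≠ w) :
    ((graphOf f).neighborSet v).ncard = (kids f v).ncard + 1 := by
  rw [nbr_eq_of_ne w f ρ hfw hρ hv]
  rw [Set.ncard_insert_of_notMem (fv_not_kid w f ρ hfw hρ hv) (Set.toFinite _)]

lemma deg_formula_w (hfw : f w = w) (hρ : ∀ v, v ≠ w → ρ (f v) < ρ v) :
    ((graphOf f).neighborSet w).ncard = (kids f w).ncard := by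
  rw [nbr_eq_w w f ρ hfw hρ]

end Deg

/-- the conclusion predicate for one module -/
def GoodT (T : SimpleGraph V) (S : Set V) : Prop :=
  (∀ v ∈ S, (T.neighborSet v).ncard = 1) ∨
    (∃ u ∈ S, 3 ≤ (T.neighborSet u).ncard ∧
      (∀ v ∈ S, v ≠ u → (T.neighborSet v).ncard = 1) ∧
      (((T.neighborSet u).ncard = 3 ∧ (T.neighborSet u ∩ S).ncard = 1) ∨
        (3 ≤ (T.neighborSet u).ncard ∧ (T.neighborSet u ∩ S).ncard = 0)))

/-- a valid state of the surgery induction -/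
def Valid (G : SimpleGraph V) (w : V) (f : V → V) (ρ : V → ℕ) : Prop :=
  f w = w ∧ (∀ v, v ≠ w → ρ (f v) < ρ v) ∧ (∀ v, v ≠ w → G.Adj v (f v)) ∧
    (∀ v, ((graphOf f).neighborSet v).ncard ≠ 2) ∧ 3 ≤ ((graphOf f).neighborSet w).ncard

section Meas

variable [Fintype V] {k : ℕ}

/-- count of internal edges -/
noncomputable def Qm (M : Fin (k + 1) → Set V) (f : V → V) : ℕ :=
  {v | ∃ j, v ∈ M j ∧ f v ∈ M j}.ncard

/-- count of bad modules -/
noncomputable def Bm (M : Fin (k + 1) → Set V) (f : V → V) : ℕ :=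
  {i : Fin (k + 1) | i ≠ 0 ∧ ¬ GoodT (graphOf f) (M i)}.ncard

noncomputable def meas (M : Fin (k + 1) → Set V) (f : V → V) : ℕ :=
  Qm M f * (k + 2) + Bm M f

lemma Bm_le (M : Fin (k + 1) → Set V) (f : V → V) : Bm M f ≤ k + 1 := by
  have := Set.ncard_le_ncard (Set.subset_univ {i : Fin (k + 1) | i ≠ 0 ∧ ¬ GoodT (graphOf f) (M i)})
    (Set.toFinite _)
  simpa [Set.ncard_univ, Bm] using this

end Meas

section MoveMain

open scoped Classical

variable [Fintype V] {G : SimpleGraph V} {k : ℕ} {M : Fin (k + 1) → Set V} {w : V}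
variable {f : V → V} {ρ : V → ℕ} {i₀ : Fin (k + 1)} {h b x₀ : V}

lemma valid_mv
    (hval : Valid G w f ρ)
    (HM : h ∈ M i₀) (Hw : w ∉ M i₀)
    (Hb : b = w ∨ (b ∈ M i₀ ∧ f b = h ∧ b ≠ h))
    (HxA : ∀ n, f^[n] x₀ ∉ M i₀)
    (HfhA : f h ∉ M i₀ → ∀ n, f^[n] (f h) ∉ M i₀)
    (HadjR : ∀ v ∈ Rset (M i₀) f, G.Adj v h)
    (Hadjx : ∀ z ∈ M i₀, G.Adj z x₀)
    (Hkx : (kids f x₀).Nonempty)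
    (HRb : (Rset (M i₀) f ∪ ({b} ∩ M i₀)).ncard ≠ 1) :
    Valid G w (mv (M i₀) h b x₀ f) (mrk (M i₀) h b f ρ (Finset.univ.sup ρ + 1)) := by
  obtain ⟨hfw, hρ, hadj, hdeg, hw3⟩ := hval
  have hx₀ : x₀ ∉ M i₀ := HxA 0
  have hN : ∀ v, ρ v < Finset.univ.sup ρ + 1 := fun v =>
    Nat.lt_succ_of_le (Finset.le_sup (Finset.mem_univ v))
  have hfw' : mv (M i₀) h b x₀ f w = w := mv_w hfw Hw
  have hρ' : ∀ v, v ≠ w → mrk (M i₀) h b f ρ (Finset.univ.sup ρ + 1) (mv (M i₀) h b x₀ f v) <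
      mrk (M i₀) h b f ρ (Finset.univ.sup ρ + 1) v :=
    mrk_decreasing hfw hρ HM Hw Hb HxA HfhA hN
  have hmono : (kids f x₀).ncard ≤ (kids f x₀ ∪ Dset (M i₀) b f).ncard :=
    Set.ncard_le_ncard Set.subset_union_left (Set.toFinite _)
  have hdegx' : 3 ≤ ((graphOf (mv (M i₀) h b x₀ f)).neighborSet x₀).ncard := by
    by_cases hxw : x₀ = w
    · subst hxw
      rw [deg_formula_w hfw' hρ', kids_mv_x₀ HM Hw Hb hx₀]
      rw [deg_formula_w hfw hρ] at hw3
      omega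
    · rw [deg_formula hfw' hρ' hxw, kids_mv_x₀ HM Hw Hb hx₀]
      have hold : ((graphOf f).neighborSet x₀).ncard = (kids f x₀).ncard + 1 :=
        deg_formula hfw hρ hxw
      have h1 : 1 ≤ (kids f x₀).ncard := (Set.ncard_pos (Set.toFinite _)).mpr Hkx
      have h2 := hdeg x₀
      rw [hold] at h2
      omega
  have hdegsame : ∀ v, v ∉ M i₀ → v ≠ x₀ →
      ((graphOf (mv (M i₀) h b x₀ f)).neighborSet v).ncard =
        ((graphOf f).neighborSet v).ncard := by
    intro v hvMi hvx
    by_cases hvw : v = w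
    · subst hvw
      rw [deg_formula_w hfw' hρ', deg_formula_w hfw hρ,
        kids_mv_out HM Hw Hb hx₀ hvMi hvx]
    · rw [deg_formula hfw' hρ' hvw, deg_formula hfw hρ hvw,
        kids_mv_out HM Hw Hb hx₀ hvMi hvx]
  refine ⟨hfw', hρ', ?_, ?_, ?_⟩
  · intro v hvw
    rcases mv_cases HM Hw Hb (x₀ := x₀) v with ⟨hc, he⟩ | ⟨hc, he⟩ | ⟨_, _, he⟩
    · rw [he]; exact HadjR v hc
    · rw [he]; exact Hadjx v hc.1
    · rw [he]; exact hadj v hvw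
  · intro v
    by_cases hvMi : v ∈ M i₀
    · have hvw : v ≠ w := fun hc => Hw (hc ▸ hvMi)
      rw [deg_formula hfw' hρ' hvw]
      by_cases hvh : v = h
      · subst hvh
        rw [kids_mv_h HM Hw Hb hx₀]
        omega
      · rw [kids_mv_leaf HM Hw Hb hx₀ hvMi hvh]
        simp
    · by_cases hvx : v = x₀
      · subst hvx; omega
      · rw [hdegsame v hvMi hvx]; exact hdeg v
  · by_cases hxw : x₀ = w
    · rw [← hxw]; exact hdegx'
    · rw [hdegsame w Hw (fun hc => hxw hc.symm)]; exact hw3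

end MoveMain

section MoveMeas

open scoped Classical

variable [Fintype V] {G : SimpleGraph V} {k : ℕ} {M : Fin (k + 1) → Set V} {w : V}
variable {f : V → V} {ρ : V → ℕ} {i₀ : Fin (k + 1)} {h b x₀ : V}

lemma part_unique (hpart : ∀ v : V, ∃! i, v ∈ M i) {v : V} {i j : Fin (k + 1)}
    (hi : v ∈ M i) (hj : v ∈ M j) : i = j := by
  obtain ⟨i', _, hu⟩ := hpart v
  rw [hu i hi, hu j hj]

lemma Qset_mv (hpart : ∀ v : V, ∃! i, v ∈ M i)
    (HM : h ∈ M i₀) (Hw : w ∉ M i₀)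
    (Hb : b = w ∨ (b ∈ M i₀ ∧ f b = h ∧ b ≠ h)) (hx₀ : x₀ ∉ M i₀) :
    {v | ∃ j, v ∈ M j ∧ mv (M i₀) h b x₀ f v ∈ M j} =
      {v | ∃ j, v ∈ M j ∧ f v ∈ M j} \ Dset (M i₀) b f := by
  ext v
  simp only [Set.mem_setOf_eq, Set.mem_diff]
  rcases mv_cases HM Hw Hb (x₀ := x₀) v with ⟨hc, he⟩ | ⟨hc, he⟩ | ⟨hR, hD, he⟩
  · rw [he]
    constructor
    · rintro ⟨j, hvj, hhj⟩
      exact absurd ((part_unique hpart hhj HM) ▸ hvj) hc.1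
    · rintro ⟨⟨j, hvj, hfj⟩, _⟩
      exact absurd ((part_unique hpart hfj hc.2) ▸ hvj) hc.1
  · rw [he]
    constructor
    · rintro ⟨j, hvj, hxj⟩
      exact absurd ((part_unique hpart hvj hc.1) ▸ hxj) hx₀
    · rintro ⟨_, hnd⟩
      exact absurd hc hnd
  · rw [he]
    constructor
    · exact fun hq => ⟨hq, hD⟩
    · exact fun hq => hq.1

lemma Qm_mv (hpart : ∀ v : V, ∃! i, v ∈ M i)
    (HM : h ∈ M i₀) (Hw : w ∉ M i₀)
    (Hb : b = w ∨ (b ∈ M i₀ ∧ f b = h ∧ b ≠ h)) (hx₀ : x₀ ∉ M i₀) :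
    Qm M (mv (M i₀) h b x₀ f) + (Dset (M i₀) b f).ncard = Qm M f := by
  unfold Qm
  rw [Qset_mv hpart HM Hw Hb hx₀]
  have hsub : Dset (M i₀) b f ⊆ {v | ∃ j, v ∈ M j ∧ f v ∈ M j} := by
    intro v hv
    exact ⟨i₀, hv.1, hv.2.1⟩
  rw [Set.ncard_diff hsub (Set.toFinite _)]
  have := Set.ncard_le_ncard hsub (Set.toFinite _)
  omega

lemma kids_mv_out' (HM : h ∈ M i₀) (Hw : w ∉ M i₀)
    (Hb : b = w ∨ (b ∈ M i₀ ∧ f b = h ∧ b ≠ h)) (hx₀ : x₀ ∉ M i₀)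
    (hD : Dset (M i₀) b f = ∅) {x : V} (hx : x ∉ M i₀) :
    kids (mv (M i₀) h b x₀ f) x = kids f x := by
  by_cases hxx : x = x₀
  · subst hxx
    rw [kids_mv_x₀ HM Hw Hb hx₀, hD, Set.union_empty]
  · exact kids_mv_out HM Hw Hb hx₀ hx hxx

lemma good_transfer (hpart : ∀ v : V, ∃! i, v ∈ M i)
    (hval : Valid G w f ρ)
    (HM : h ∈ M i₀) (Hw : w ∉ M i₀)
    (Hb : b = w ∨ (b ∈ M i₀ ∧ f b = h ∧ b ≠ h))
    (HxA : ∀ n, f^[n] x₀ ∉ M i₀)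
    (HfhA : f h ∉ M i₀ → ∀ n, f^[n] (f h) ∉ M i₀)
    (hval' : Valid G w (mv (M i₀) h b x₀ f) (mrk (M i₀) h b f ρ (Finset.univ.sup ρ + 1)))
    (hD : Dset (M i₀) b f = ∅) {j : Fin (k + 1)} (hj : j ≠ i₀)
    (hgood : GoodT (graphOf f) (M j)) :
    GoodT (graphOf (mv (M i₀) h b x₀ f)) (M j) := by
  obtain ⟨hfw, hρ, _, _, _⟩ := hval
  obtain ⟨hfw', hρ', _, _, _⟩ := hval'
  have hx₀ : x₀ ∉ M i₀ := HxA 0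
  have hdisj : ∀ x ∈ M j, x ∉ M i₀ := by
    intro x hxj hxi
    exact hj (part_unique hpart hxj hxi)
  have hdeg : ∀ x ∈ M j,
      ((graphOf (mv (M i₀) h b x₀ f)).neighborSet x).ncard =
        ((graphOf f).neighborSet x).ncard := by
    intro x hxj
    by_cases hxw : x = w
    · subst hxw
      rw [deg_formula_w hfw' hρ', deg_formula_w hfw hρ, kids_mv_out' HM Hw Hb hx₀ hD (hdisj _ hxj)]
    · rw [deg_formula hfw' hρ' hxw, deg_formula hfw hρ hxw,
        kids_mv_out' HM Hw Hb hx₀ hD (hdisj _ hxj)]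
  have hint : ∀ x ∈ M j,
      ((graphOf (mv (M i₀) h b x₀ f)).neighborSet x ∩ M j).ncard =
        ((graphOf f).neighborSet x ∩ M j).ncard := by
    intro x hxj
    by_cases hxw : x = w
    · subst hxw
      rw [nbr_eq_w x _ _ hfw' hρ', nbr_eq_w x f ρ hfw hρ,
        kids_mv_out' HM Hw Hb hx₀ hD (hdisj _ hxj)]
    · rw [nbr_eq_of_ne w _ _ hfw' hρ' hxw, nbr_eq_of_ne w f ρ hfw hρ hxw,
        kids_mv_out' HM Hw Hb hx₀ hD (hdisj _ hxj)]
      rcases mv_cases HM Hw Hb (x₀ := x₀) x with ⟨hc, he⟩ | ⟨hc, he⟩ | ⟨_, _, he⟩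
      · rw [he]
        have h1 : h ∉ M j := fun hc2 => hj (part_unique hpart hc2 HM)
        have h2 : f x ∉ M j := fun hc2 => hj (part_unique hpart hc2 hc.2)
        rw [Set.insert_inter_of_notMem h1, Set.insert_inter_of_notMem h2]
      · exact absurd hc.1 (hdisj _ hxj)
      · rw [he]
  unfold GoodT at hgood ⊢
  rcases hgood with hleft | ⟨u, hu, h3, hleaf, hcase⟩
  · exact Or.inl (fun v hv => (hdeg v hv).trans (hleft v hv))
  · refine Or.inr ⟨u, hu, ?_, ?_, ?_⟩
    · rw [hdeg u hu]; exact h3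
    · intro v hv hvu
      rw [hdeg v hv]; exact hleaf v hv hvu
    · rcases hcase with ⟨hc1, hc2⟩ | ⟨hc1, hc2⟩
      · exact Or.inl ⟨(hdeg u hu).trans hc1, (hint u hu).trans hc2⟩
      · exact Or.inr ⟨(hdeg u hu) ▸ hc1, (hint u hu).trans hc2⟩

end MoveMeas

section Driver

open scoped Classical

variable [Fintype V] {G : SimpleGraph V} {k : ℕ} {M : Fin (k + 1) → Set V} {w : V}

lemma meas_lt_of_unfrozen {f : V → V} {i₀ : Fin (k + 1)} {h b x₀ : V}
    (hpart : ∀ v : V, ∃! i, v ∈ M i)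
    (HM : h ∈ M i₀) (Hw : w ∉ M i₀)
    (Hb : b = w ∨ (b ∈ M i₀ ∧ f b = h ∧ b ≠ h)) (hx₀ : x₀ ∉ M i₀)
    (hDne : (Dset (M i₀) b f).Nonempty) :
    meas M (mv (M i₀) h b x₀ f) < meas M f := by
  have hq := Qm_mv hpart HM Hw Hb hx₀
  have hd1 : 1 ≤ (Dset (M i₀) b f).ncard := (Set.ncard_pos (Set.toFinite _)).mpr hDne
  have hb' := Bm_le M (mv (M i₀) h b x₀ f)
  have hQ : Qm M (mv (M i₀) h b x₀ f) + 1 ≤ Qm M f := by omega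
  have hmul : (Qm M (mv (M i₀) h b x₀ f) + 1) * (k + 2) ≤ Qm M f * (k + 2) :=
    Nat.mul_le_mul_right _ hQ
  unfold meas
  have hexp : (Qm M (mv (M i₀) h b x₀ f) + 1) * (k + 2) =
      Qm M (mv (M i₀) h b x₀ f) * (k + 2) + (k + 2) := by ring
  omega

lemma driver (hpart : ∀ v : V, ∃! i, v ∈ M i)
    (hmod : ∀ i, ∀ x ∉ M i, (∀ y ∈ M i, G.Adj x y) ∨ (∀ y ∈ M i, ¬ G.Adj x y))
    (hw0 : w ∈ M 0) :
    ∀ (n : ℕ) (f : V → V) (ρ : V → ℕ), Valid G w f ρ → meas M f = n →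
      ∃ (f' : V → V) (ρ' : V → ℕ), Valid G w f' ρ' ∧
        ∀ i, i ≠ 0 → GoodT (graphOf f') (M i) := by
  intro n
  induction n using Nat.strong_induction_on with
  | _ n IH =>
  intro f ρ hval hmeas
  by_cases hall : ∀ i, i ≠ 0 → GoodT (graphOf f) (M i)
  · exact ⟨f, ρ, hval, hall⟩
  push_neg at hall
  obtain ⟨i₀, hi₀, hbad⟩ := hall
  obtain ⟨hfw, hρ, hadj, hdeg, hw3⟩ := hval
  have hval' : Valid G w f ρ := ⟨hfw, hρ, hadj, hdeg, hw3⟩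
  have Hw : w ∉ M i₀ := fun hc => hi₀ (part_unique hpart hc hw0)
  have hMine : (M i₀).Nonempty := by
    by_contra hemp
    rw [Set.not_nonempty_iff_eq_empty] at hemp
    exact hbad (Or.inl (fun v hv => absurd hv (by rw [hemp]; exact Set.notMem_empty v)))
  obtain ⟨zm, hzm, hzmin⟩ := Set.exists_min_image (M i₀) ρ (Set.toFinite _) hMine
  have hzmw : zm ≠ w := fun hc => Hw (hc ▸ hzm)
  have hx₀ : f zm ∉ M i₀ := by
    intro hc
    have h1 := hzmin _ hc
    have h2 := hρ zm hzmw
    omega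
  have HxA : ∀ m, f^[m] (f zm) ∉ M i₀ := by
    intro m hc
    have h1 : ρ (f^[m] (f zm)) ≤ ρ (f zm) := iter_rho_le w f ρ hfw hρ m (f zm)
    have h2 : ρ (f zm) < ρ zm := hρ zm hzmw
    have h3 : ρ zm ≤ ρ (f^[m] (f zm)) := hzmin _ hc
    omega
  have Hadjx : ∀ z ∈ M i₀, G.Adj z (f zm) := by
    have hax : G.Adj zm (f zm) := hadj zm hzmw
    rcases hmod i₀ (f zm) hx₀ with hall2 | hnone
    · exact fun z hz => (hall2 z hz).symm
    · exact absurd hax.symm (hnone zm hzm)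
  have Hkx : (kids f (f zm)).Nonempty := ⟨zm, rfl, fun hc => hx₀ (hc ▸ hzm)⟩
  have hwMinter : ({w} : Set V) ∩ M i₀ = ∅ := by
    ext x
    simp only [Set.mem_inter_iff, Set.mem_singleton_iff, Set.mem_empty_iff_false, iff_false,
      not_and]
    rintro rfl
    exact Hw
  by_cases hRe : Rset (M i₀) f = ∅
  · by_cases hDe : Dset (M i₀) w f = ∅
    · -- module i₀ is in fact good : all leaves, contradiction
      exfalso
      apply hbad
      left
      intro v hv
      have hvw : v ≠ w := fun hc => Hw (hc ▸ hv)
      rw [deg_formula hfw hρ hvw]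
      have hk : kids f v = ∅ := by
        ext x
        simp only [kids, Set.mem_setOf_eq, Set.mem_empty_iff_false, iff_false, not_and]
        intro hfx hxv
        by_cases hxMi : x ∈ M i₀
        · have hxw : x ≠ w := fun hc => Hw (hc ▸ hxMi)
          have : x ∈ Dset (M i₀) w f := ⟨hxMi, hfx ▸ hv, hxw⟩
          rw [hDe] at this
          exact this
        · have : x ∈ Rset (M i₀) f := ⟨hxMi, hfx ▸ hv⟩
          rw [hRe] at this
          exact this
      rw [hk]
      simp
    · -- unfrozen move, h := zm, b := w
      have HadjR : ∀ v ∈ Rset (M i₀) f, G.Adj v zm := by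
        rw [hRe]; intro v hv; exact absurd hv (Set.notMem_empty v)
      have HRb : (Rset (M i₀) f ∪ ({w} ∩ M i₀)).ncard ≠ 1 := by
        rw [hRe, hwMinter]
        simp
      have hvalid2 := valid_mv hval' hzm Hw (Or.inl rfl) HxA (fun _ => HxA) HadjR Hadjx Hkx HRb
      have hlt := meas_lt_of_unfrozen (h := zm) (x₀ := f zm) hpart hzm Hw (Or.inl rfl) hx₀
        (Set.nonempty_iff_ne_empty.mpr hDe)
      exact IH _ (hmeas ▸ hlt) _ _ hvalid2 rfl
  · by_cases hR1 : ∃ r1, Rset (M i₀) f = {r1}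
    · obtain ⟨r1, hr1⟩ := hR1
      have hr1R : r1 ∈ Rset (M i₀) f := by rw [hr1]; rfl
      have hzs : f r1 ∈ M i₀ := hr1R.2
      have hzsw : f r1 ≠ w := fun hc => Hw (hc ▸ hzs)
      have hr1w : r1 ≠ w := by
        intro hc
        apply Hw
        have h2 := hr1R.2
        rw [hc, hfw] at h2
        exact h2
      have hr1k : r1 ∈ kids f (f r1) := ⟨rfl, fun hc => hr1R.1 (hc ▸ hzs)⟩
      have h2k : 2 ≤ (kids f (f r1)).ncard := by
        have hd := hdeg (f r1)
        rw [deg_formula hfw hρ hzsw] at hd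
        have h1 : 1 ≤ (kids f (f r1)).ncard :=
          (Set.ncard_pos (Set.toFinite _)).mpr ⟨r1, hr1k⟩
        omega
      obtain ⟨b, hbk, hbr1⟩ := Set.exists_ne_of_one_lt_ncard h2k r1
      have hbMi : b ∈ M i₀ := by
        by_contra hbm
        have : b ∈ Rset (M i₀) f := ⟨hbm, hbk.1 ▸ hzs⟩
        rw [hr1] at this
        exact hbr1 this
      have hbw : b ≠ w := fun hc => Hw (hc ▸ hbMi)
      have hbzs : b ≠ f r1 := fun hc => f_ne_self w f ρ hfw hρ hbw (hc ▸ hbk.1)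
      have Hb : b = w ∨ (b ∈ M i₀ ∧ f b = f r1 ∧ b ≠ f r1) := Or.inr ⟨hbMi, hbk.1, hbzs⟩
      have HfhA : f (f r1) ∉ M i₀ → ∀ m, f^[m] (f (f r1)) ∉ M i₀ := by
        intro hfzs
        intro m
        by_contra hc
        have hex : ∃ p, f^[p] (f (f r1)) ∈ M i₀ := ⟨m, hc⟩
        have hn0 := Nat.find_spec hex
        set n₀ := Nat.find hex with hn₀def
        have hn₀ne : n₀ ≠ 0 := by
          intro hzero
          rw [hzero] at hn0
          exact hfzs hn0
        obtain ⟨p, hp⟩ := Nat.exists_eq_succ_of_ne_zero hn₀ne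
        have hpmin : f^[p] (f (f r1)) ∉ M i₀ := Nat.find_min hex (by omega)
        have hfu : f (f^[p] (f (f r1))) ∈ M i₀ := by
          rw [hp, Nat.succ_eq_add_one, Function.iterate_succ_apply'] at hn0
          exact hn0
        have huR : f^[p] (f (f r1)) ∈ Rset (M i₀) f := ⟨hpmin, hfu⟩
        rw [hr1] at huR
        have hur1 : f^[p] (f (f r1)) = r1 := huR
        have h1 : ρ (f^[p] (f (f r1))) ≤ ρ (f (f r1)) := iter_rho_le w f ρ hfw hρ p _
        have h2 : ρ (f (f r1)) < ρ (f r1) := hρ (f r1) hzsw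
        have h3 : ρ (f r1) < ρ r1 := hρ r1 hr1w
        rw [hur1] at h1
        omega
      by_cases hDb : Dset (M i₀) b f = ∅
      · -- module i₀ already good (hub with one internal kid), contradiction
        exfalso
        apply hbad
        right
        have hfzs : f (f r1) ∉ M i₀ := by
          intro hc
          have : f r1 ∈ Dset (M i₀) b f := ⟨hzs, hc, fun hce => hbzs hce.symm⟩
          rw [hDb] at this
          exact this
        have hkzs : kids f (f r1) = {r1, b} := by
          ext x
          simp only [kids, Set.mem_setOf_eq, Set.mem_insert_iff, Set.mem_singleton_iff]
          constructor
          · rintro ⟨hfx, hxzs⟩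
            by_cases hxMi : x ∈ M i₀
            · right
              by_contra hxb
              have : x ∈ Dset (M i₀) b f := ⟨hxMi, hfx ▸ hzs, hxb⟩
              rw [hDb] at this
              exact this
            · left
              have : x ∈ Rset (M i₀) f := ⟨hxMi, hfx ▸ hzs⟩
              rw [hr1] at this
              exact this
          · rintro (rfl | rfl)
            · exact hr1k
            · exact hbk
        have hfzsr1 : f (f r1) ≠ r1 := by
          intro hc
          have hne : r1 ≠ f r1 := by
            intro hce
            apply hr1R.1
            rw [hce]
            exact hzs
          exact no_mutual w f ρ hfw hρ hne rfl hc
        have hfzsb : f (f r1) ≠ b := by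
          intro hc
          apply hfzs
          rw [hc]
          exact hbMi
        have hnbr : (graphOf f).neighborSet (f r1) = {f (f r1), r1, b} := by
          rw [nbr_eq_of_ne w f ρ hfw hρ hzsw, hkzs]
        have hncard3 : ((graphOf f).neighborSet (f r1)).ncard = 3 := by
          rw [hnbr]
          rw [Set.ncard_insert_of_notMem (by
            simp only [Set.mem_insert_iff, Set.mem_singleton_iff]
            push_neg
            exact ⟨hfzsr1, hfzsb⟩) (Set.toFinite _)]
          rw [Set.ncard_pair hbr1.symm]
        refine ⟨f r1, hzs, by omega, ?_, Or.inl ⟨hncard3, ?_⟩⟩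
        · intro v hv hvzs
          have hvw : v ≠ w := fun hc => Hw (hc ▸ hv)
          rw [deg_formula hfw hρ hvw]
          have hk : kids f v = ∅ := by
            ext x
            simp only [kids, Set.mem_setOf_eq, Set.mem_empty_iff_false, iff_false, not_and]
            intro hfx hxv
            by_cases hxMi : x ∈ M i₀
            · by_cases hxb : x = b
              · subst hxb
                exact hvzs (hfx ▸ hbk.1)
              · have : x ∈ Dset (M i₀) b f := ⟨hxMi, hfx ▸ hv, hxb⟩
                rw [hDb] at this
                exact this
            · have : x ∈ Rset (M i₀) f := ⟨hxMi, hfx ▸ hv⟩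
              rw [hr1] at this
              have hxr1 : x = r1 := this
              subst hxr1
              exact hvzs hfx.symm
          rw [hk]
          simp
        · rw [hnbr]
          have : ({f (f r1), r1, b} : Set V) ∩ M i₀ = {b} := by
            ext x
            simp only [Set.mem_inter_iff, Set.mem_insert_iff, Set.mem_singleton_iff]
            constructor
            · rintro ⟨rfl | rfl | rfl, hxMi⟩
              · exact absurd hxMi hfzs
              · exact absurd hxMi hr1R.1
              · rfl
            · rintro rfl
              exact ⟨Or.inr (Or.inr rfl), hbMi⟩
          rw [this, Set.ncard_singleton]
      · -- unfrozen move, h := f r1, b := b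
        have HadjR : ∀ v ∈ Rset (M i₀) f, G.Adj v (f r1) := by
          intro v hv
          rw [hr1] at hv
          have : v = r1 := hv
          subst this
          exact hadj v hr1w
        have HRb : (Rset (M i₀) f ∪ ({b} ∩ M i₀)).ncard ≠ 1 := by
          rw [hr1, Set.inter_eq_self_of_subset_left (by simpa using hbMi)]
          rw [Set.singleton_union, Set.ncard_insert_of_notMem
            (by simpa using hbr1.symm) (Set.toFinite _), Set.ncard_singleton]
          omega
        have hvalid2 := valid_mv hval' hzs Hw Hb HxA HfhA HadjR Hadjx Hkx HRb
        have hlt := meas_lt_of_unfrozen (h := f r1) (x₀ := f zm) hpart hzs Hw Hb hx₀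
          (Set.nonempty_iff_ne_empty.mpr hDb)
        exact IH _ (hmeas ▸ hlt) _ _ hvalid2 rfl
    · -- |R| ≥ 2 : move with h := zm, b := w
      have hR2 : 2 ≤ (Rset (M i₀) f).ncard := by
        have h0 : (Rset (M i₀) f).ncard ≠ 0 :=
          fun hc => hRe ((Set.ncard_eq_zero (Set.toFinite _)).mp hc)
        have h1 : (Rset (M i₀) f).ncard ≠ 1 :=
          fun hc => hR1 (Set.ncard_eq_one.mp hc)
        omega
      have HadjR : ∀ v ∈ Rset (M i₀) f, G.Adj v zm := by
        intro v hv
        have hvw : v ≠ w := by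
          intro hc
          apply Hw
          have h2 := hv.2
          rw [hc, hfw] at h2
          exact h2
        rcases hmod i₀ v hv.1 with hall2 | hnone
        · exact hall2 zm hzm
        · exact absurd (hadj v hvw) (hnone (f v) hv.2)
      have HRb : (Rset (M i₀) f ∪ ({w} ∩ M i₀)).ncard ≠ 1 := by
        rw [hwMinter, Set.union_empty]
        omega
      have hvalid2 := valid_mv hval' hzm Hw (Or.inl rfl) HxA (fun _ => HxA) HadjR Hadjx Hkx HRb
      by_cases hDe : Dset (M i₀) w f = ∅
      · -- frozen move : B decreases
        have hgood_new : GoodT (graphOf (mv (M i₀) zm w (f zm) f)) (M i₀) := by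
          obtain ⟨hfw2, hρ2, _, _, _⟩ := hvalid2
          right
          have hkh : kids (mv (M i₀) zm w (f zm) f) zm = Rset (M i₀) f := by
            rw [kids_mv_h hzm Hw (Or.inl rfl) hx₀, hwMinter, Set.union_empty]
          have hmvzm : mv (M i₀) zm w (f zm) f zm = f zm := mv_h_not_mem hx₀ hzm
          have hnbr : (graphOf (mv (M i₀) zm w (f zm) f)).neighborSet zm =
              insert (f zm) (Rset (M i₀) f) := by
            rw [nbr_eq_of_ne w _ _ hfw2 hρ2 hzmw, hkh, hmvzm]
          have hfzmR : f zm ∉ Rset (M i₀) f := by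
            intro hc
            exact HxA 1 (by simpa [Function.iterate_one] using hc.2)
          have hncard : ((graphOf (mv (M i₀) zm w (f zm) f)).neighborSet zm).ncard =
              (Rset (M i₀) f).ncard + 1 := by
            rw [hnbr, Set.ncard_insert_of_notMem hfzmR (Set.toFinite _)]
          refine ⟨zm, hzm, by omega, ?_, Or.inr ⟨by omega, ?_⟩⟩
          · intro v hv hvzm
            have hvw : v ≠ w := fun hc => Hw (hc ▸ hv)
            rw [deg_formula hfw2 hρ2 hvw,
              kids_mv_leaf hzm Hw (Or.inl rfl) hx₀ hv hvzm]
            simp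
          · rw [hnbr]
            have : (insert (f zm) (Rset (M i₀) f)) ∩ M i₀ = ∅ := by
              ext x
              simp only [Set.mem_inter_iff, Set.mem_insert_iff, Set.mem_empty_iff_false,
                iff_false, not_and]
              rintro (rfl | hx) hxMi
              · exact hx₀ hxMi
              · exact hx.1 hxMi
            rw [this]
            simp
        have hBlt : Bm M (mv (M i₀) zm w (f zm) f) < Bm M f := by
          have hsub : {i : Fin (k + 1) | i ≠ 0 ∧ ¬ GoodT (graphOf (mv (M i₀) zm w (f zm) f)) (M i)}
              ⊆ {i : Fin (k + 1) | i ≠ 0 ∧ ¬ GoodT (graphOf f) (M i)} \ {i₀} := by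
            intro i hi
            obtain ⟨hi0, hbadi⟩ := hi
            by_cases hii : i = i₀
            · exact absurd (hii ▸ hgood_new) hbadi
            · refine ⟨⟨hi0, fun hgoodi => hbadi ?_⟩, hii⟩
              exact good_transfer hpart hval' hzm Hw (Or.inl rfl) HxA (fun _ => HxA)
                hvalid2 hDe hii hgoodi
          have hmem : i₀ ∈ {i : Fin (k + 1) | i ≠ 0 ∧ ¬ GoodT (graphOf f) (M i)} := ⟨hi₀, hbad⟩
          calc Bm M (mv (M i₀) zm w (f zm) f)
              ≤ ({i : Fin (k + 1) | i ≠ 0 ∧ ¬ GoodT (graphOf f) (M i)} \ {i₀}).ncard :=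
                Set.ncard_le_ncard hsub (Set.toFinite _)
            _ < Bm M f := Set.ncard_diff_singleton_lt_of_mem hmem (Set.toFinite _)
        have hQeq : Qm M (mv (M i₀) zm w (f zm) f) = Qm M f := by
          have hq := Qm_mv (f := f) (b := w) (h := zm) (x₀ := f zm) hpart hzm Hw (Or.inl rfl) hx₀
          rw [hDe] at hq
          simpa using hq
        have hlt : meas M (mv (M i₀) zm w (f zm) f) < meas M f := by
          unfold meas
          rw [hQeq]
          omega
        exact IH _ (hmeas ▸ hlt) _ _ hvalid2 rfl
      · -- unfrozen
        have hlt := meas_lt_of_unfrozen (h := zm) (x₀ := f zm) hpart hzm Hw (Or.inl rfl) hx₀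
          (Set.nonempty_iff_ne_empty.mpr hDe)
        exact IH _ (hmeas ▸ hlt) _ _ hvalid2 rfl

end Driver

section Init

open scoped Classical
open SimpleGraph.Walk

variable {T₀ : SimpleGraph V} {w : V}

/-- the chosen path to the root -/
noncomputable def rootPath (hconn : T₀.Connected) (w v : V) : T₀.Path v w :=
  (hconn v w).some.toPath

/-- initial parent map -/
noncomputable def f0 (hconn : T₀.Connected) (w : V) : V → V := fun v =>
  ((rootPath hconn w v : T₀.Path v w) : T₀.Walk v w).getVert 1

/-- initial rank -/
noncomputable def ρ0 (hconn : T₀.Connected) (w : V) : V → ℕ := fun v =>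
  ((rootPath hconn w v : T₀.Path v w) : T₀.Walk v w).length

lemma rootPath_w (hconn : T₀.Connected) :
    ((rootPath hconn w w : T₀.Path w w) : T₀.Walk w w) = SimpleGraph.Walk.nil := by
  have := (rootPath hconn w w).2
  exact SimpleGraph.Walk.isPath_iff_eq_nil.mp this

lemma f0_w (hconn : T₀.Connected) : f0 hconn w w = w := by
  unfold f0
  rw [rootPath_w hconn]
  rfl

lemma rootPath_eq (hconn : T₀.Connected) (hacyc : T₀.IsAcyclic) {v : V}
    (p : T₀.Walk v w) (hp : p.IsPath) :
    ((rootPath hconn w v : T₀.Path v w) : T₀.Walk v w) = p := by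
  have := hacyc.path_unique (rootPath hconn w v) ⟨p, hp⟩
  exact congrArg Subtype.val this

lemma f0_step (hconn : T₀.Connected) (hacyc : T₀.IsAcyclic) {v : V} (hv : v ≠ w) :
    T₀.Adj v (f0 hconn w v) ∧ ρ0 hconn w (f0 hconn w v) < ρ0 hconn w v := by
  have hnil : ¬ ((rootPath hconn w v : T₀.Path v w) : T₀.Walk v w).Nil :=
    SimpleGraph.Walk.not_nil_of_ne hv
  obtain ⟨u, hadj, q, hpq⟩ := SimpleGraph.Walk.not_nil_iff.mp hnil
  have hqpath : q.IsPath := by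
    have := (rootPath hconn w v).2
    rw [hpq, SimpleGraph.Walk.cons_isPath_iff] at this
    exact this.1
  have hf0 : f0 hconn w v = u := by
    unfold f0
    rw [hpq, SimpleGraph.Walk.getVert_cons_succ, SimpleGraph.Walk.getVert_zero]
  have hρv : ρ0 hconn w v = q.length + 1 := by
    unfold ρ0
    rw [hpq, SimpleGraph.Walk.length_cons]
  have hρu : ρ0 hconn w u = q.length := by
    unfold ρ0
    rw [rootPath_eq hconn hacyc q hqpath]
  rw [hf0, hρu, hρv]
  exact ⟨hadj, by omega⟩

lemma graphOf_f0_eq (hconn : T₀.Connected) (hacyc : T₀.IsAcyclic) :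
    graphOf (f0 hconn w) = T₀ := by
  ext x y
  rw [graphOf_adj]
  constructor
  · rintro ⟨hne, hf | hf⟩
    · have hx : x ≠ w := by
        rintro rfl
        rw [f0_w hconn] at hf
        exact hne hf
      exact hf ▸ (f0_step hconn hacyc hx).1
    · have hy : y ≠ w := by
        rintro rfl
        rw [f0_w hconn] at hf
        exact hne hf.symm
      exact (hf ▸ (f0_step hconn hacyc hy).1).symm
  · intro hadj
    refine ⟨hadj.ne, ?_⟩
    by_cases hy : y = w
    · subst hy
      left
      have hs : (SimpleGraph.Walk.cons hadj SimpleGraph.Walk.nil).IsPath :=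
        SimpleGraph.Path.singleton hadj |>.2
      unfold f0
      rw [rootPath_eq hconn hacyc _ hs]
      rfl
    · by_cases hxs : x ∈ ((rootPath hconn w y : T₀.Path y w) : T₀.Walk y w).support
      · right
        set p := ((rootPath hconn w y : T₀.Path y w) : T₀.Walk y w) with hpdef
        have htake : (p.takeUntil x hxs).IsPath := (rootPath hconn w y).2.takeUntil hxs
        have hsingle : (SimpleGraph.Walk.cons hadj.symm SimpleGraph.Walk.nil : T₀.Walk y x).IsPath :=
          SimpleGraph.Path.singleton hadj.symm |>.2
        have hq : p.takeUntil x hxs = SimpleGraph.Walk.cons hadj.symm SimpleGraph.Walk.nil := by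
          have := hacyc.path_unique ⟨p.takeUntil x hxs, htake⟩ ⟨_, hsingle⟩
          exact congrArg Subtype.val this
        have hspec := p.take_spec hxs
        rw [hq] at hspec
        unfold f0
        rw [← hpdef, ← hspec]
        simp [SimpleGraph.Walk.getVert_cons_succ, SimpleGraph.Walk.getVert_zero]
      · left
        have hx : x ≠ w := by
          rintro rfl
          exact hxs (SimpleGraph.Walk.end_mem_support _)
        have hcons : (SimpleGraph.Walk.cons hadj
            ((rootPath hconn w y : T₀.Path y w) : T₀.Walk y w)).IsPath :=
          (rootPath hconn w y).2.cons hxs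
        unfold f0
        rw [rootPath_eq hconn hacyc _ hcons]
        rw [SimpleGraph.Walk.getVert_cons_succ, SimpleGraph.Walk.getVert_zero]

lemma valid_init {G : SimpleGraph V} [Fintype V]
    (hle : T₀ ≤ G) (hconn : T₀.Connected) (hacyc : T₀.IsAcyclic)
    (hdeg2 : ∀ v : V, (T₀.neighborSet v).ncard ≠ 2)
    (hw1 : (T₀.neighborSet w).ncard ≠ 1)
    (hV2 : ∃ u : V, u ≠ w) :
    Valid G w (f0 hconn w) (ρ0 hconn w) := by
  have hT := graphOf_f0_eq (w := w) hconn hacyc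
  refine ⟨f0_w hconn, fun v hv => (f0_step hconn hacyc hv).2, ?_, ?_, ?_⟩
  · intro v hv
    exact hle (f0_step hconn hacyc hv).1
  · intro v
    rw [hT]
    exact hdeg2 v
  · rw [hT]
    obtain ⟨u, hu⟩ := hV2
    have hne : (T₀.neighborSet w).Nonempty := by
      have hreach : T₀.Reachable w u := hconn w u
      obtain ⟨p⟩ := hreach
      have hnil : ¬ p.Nil := SimpleGraph.Walk.not_nil_of_ne (Ne.symm hu)
      obtain ⟨z, hadj, q, _⟩ := SimpleGraph.Walk.not_nil_iff.mp hnil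
      exact ⟨z, hadj⟩
    have h1 : 1 ≤ (T₀.neighborSet w).ncard := (Set.ncard_pos (Set.toFinite _)).mpr hne
    have h2 := hdeg2 w
    omega

end Init

end Stmt15

/-- Suppose `G` is decomposed into modules `M 0, …, M k` with `|M 0| = 1`, and `G` admits
a HIST in which the vertex of `M 0` is not a leaf. Then there is a HIST `T` of `G` such
that for each `i ≥ 1`, either all vertices of `M i` are leaves of `T`, or exactly one
vertex `u ∈ M i` has `deg_T u ≥ 3` with all other vertices of `M i` leaves, and moreover
either `deg_T u = 3` with `u` having exactly one `T`-neighbor inside `M i`, or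
`deg_T u ≥ 3` with `u` having no `T`-neighbor inside `M i`. -/
theorem stmt15 {V : Type*} [Fintype V] (G : SimpleGraph V) (k : ℕ)
    (M : Fin (k + 1) → Set V)
    (hpartition : ∀ v : V, ∃! i, v ∈ M i)
    (hmodule : ∀ i, ∀ x ∉ M i, (∀ y ∈ M i, G.Adj x y) ∨ (∀ y ∈ M i, ¬ G.Adj x y))
    (hM0 : (M 0).ncard = 1)
    (hHIST : ∃ T₀, IsHIST G T₀ ∧ ∀ v ∈ M 0, (T₀.neighborSet v).ncard ≠ 1) :
    ∃ T, IsHIST G T ∧ ∀ i : Fin (k + 1), i ≠ 0 →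
      ((∀ v ∈ M i, (T.neighborSet v).ncard = 1) ∨
        (∃ u ∈ M i, 3 ≤ (T.neighborSet u).ncard ∧
          (∀ v ∈ M i, v ≠ u → (T.neighborSet v).ncard = 1) ∧
          (((T.neighborSet u).ncard = 3 ∧ (T.neighborSet u ∩ M i).ncard = 1) ∨
            (3 ≤ (T.neighborSet u).ncard ∧ (T.neighborSet u ∩ M i).ncard = 0)))) := by
  classical
  obtain ⟨T₀, ⟨hle, hconn, hacyc, hdeg2⟩, hw1⟩ := hHIST
  obtain ⟨w, hM0w⟩ := Set.ncard_eq_one.mp hM0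
  have hw0 : w ∈ M 0 := by rw [hM0w]; exact rfl
  by_cases hV2 : ∃ u : V, u ≠ w
  · have hval := Stmt15.valid_init hle hconn hacyc hdeg2 (hw1 w hw0) hV2
    obtain ⟨f', ρ', hval', hgood⟩ := Stmt15.driver hpartition hmodule hw0
      (Stmt15.meas M (Stmt15.f0 hconn w)) _ _ hval rfl
    obtain ⟨hfw', hρ', hadj', hdeg', hw3'⟩ := hval'
    have : Nonempty V := ⟨w⟩
    refine ⟨Stmt15.graphOf f', ⟨Stmt15.graphOf_le w f' hfw' hadj',
      Stmt15.graphOf_connected w f' ρ' hfw' hρ', Stmt15.graphOf_acyclic w f' ρ' hfw' hρ',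
      hdeg'⟩, ?_⟩
    intro i hi
    exact hgood i hi
  · push_neg at hV2
    refine ⟨T₀, ⟨hle, hconn, hacyc, hdeg2⟩, ?_⟩
    intro i hi
    left
    intro v hv
    exfalso
    rw [hV2 v] at hv
    exact hi (Stmt15.part_unique hpartition hv hw0)
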